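/- Let r ≥ 1 be an integer and suppose E[|X_1|^r] < ∞. Then for any game ν on N, E[Y_ν^r] = (1/n!) · Σ_{σ ∈ 𝔖_n} Σ_{k_1,…,k_r = 1}^n (Π_{i=1}^r p_{k_i}^{ν,σ}) · E[Π_{i=1}^r X_{n−k_i+1:n}]. -/

import Mathlib

open MeasureTheory ProbabilityTheory Finset

noncomputable section

namespace ChoquetPaper

variable {n : ℕ} {Ω : Type*}

/-- `ν_i^σ := ν({σ(1),…,σ(i)})` (here `i : ℕ`, `0 ≤ i ≤ n`). -/
def nuSig (ν : Finset (Fin n) → ℝ) (σ : Equiv.Perm (Fin n)) (i : ℕ) : ℝ :=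
  ν ((Finset.univ.filter (fun j : Fin n => (j : ℕ) < i)).image σ)

/-- The Choquet sum `Σ_{i=1}^n p_i^{ν,σ} x_{σ(i)}` w.r.t. a fixed permutation `σ`. -/
def choquetPerm (ν : Finset (Fin n) → ℝ) (σ : Equiv.Perm (Fin n)) (x : Fin n → ℝ) : ℝ :=
  ∑ i : Fin n, (nuSig ν σ ((i : ℕ) + 1) - nuSig ν σ (i : ℕ)) * x (σ i)

/-- A permutation `σ` such that `x_{σ(1)} ≥ ⋯ ≥ x_{σ(n)}`. -/
def sortDesc (x : Fin n → ℝ) : Equiv.Perm (Fin n) :=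
  (Fin.revPerm).trans (Tuple.sort x)

/-- The discrete Choquet integral `C_ν(x)`. -/
def choquet (ν : Finset (Fin n) → ℝ) (x : Fin n → ℝ) : ℝ :=
  choquetPerm ν (sortDesc x) x

/-- The `i`-th order statistic `X_{i:n}` (1-based), with the convention `X_{0:n} := 0`. -/
def orderStat (X : Fin n → Ω → ℝ) (i : ℕ) (ω : Ω) : ℝ :=
  if h : i - 1 < n ∧ 1 ≤ i then X (Tuple.sort (fun j => X j ω) ⟨i - 1, h.1⟩) ω else 0

/-- `Y_ν^σ := Σ_{i=1}^n p_i^{ν,σ} X_{n−i+1:n}`. -/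
def Ysig (ν : Finset (Fin n) → ℝ) (σ : Equiv.Perm (Fin n)) (X : Fin n → Ω → ℝ) (ω : Ω) : ℝ :=
  ∑ i : Fin n, (nuSig ν σ ((i : ℕ) + 1) - nuSig ν σ (i : ℕ)) * orderStat X (n - (i : ℕ)) ω

/-- plus truncated power function -/
def tpowPos (t : ℝ) (m : ℕ) : ℝ := if 0 < t then t ^ m else 0

/-- minus truncated power function -/
def tpowNeg (t : ℝ) (m : ℕ) : ℝ := if t < 0 then t ^ m else 0

/-- divided difference at pairwise distinct points indexed by a finite set -/
def ddiff {ι : Type*} [DecidableEq ι] (g : ℝ → ℝ) (s : Finset ι) (a : ι → ℝ) : ℝ :=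
  ∑ i ∈ s, g (a i) / ∏ j ∈ s.erase i, (a i - a j)


/-!
Almost surely the sample has no ties, because two independent variables with an atomless law
coincide with probability zero. For a tie-free sample `x`, the descending sorting permutation of
`x ∘ τ` is `τ⁻¹ * sortDesc x`, so as `τ` runs over `𝔖_n` the Choquet integrals `C_ν(x ∘ τ)` are
exactly the sums `Y_ν^σ`, each `σ` occurring once. Since the law `μ^⊗n` of the sample is
permutation invariant, `E[C_ν(X)^r]` is the average of the `E[C_ν(X ∘ τ)^r]`; expanding
`(Y_ν^σ)^r` multinomially gives the formula. Everything is integrable because both `|C_ν(x)|` and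
the order statistics are bounded by multiples of `∑ j, |x j|`, which lies in `L^r`.
-/

open Function

theorem measurable_sort_eq (π : Equiv.Perm (Fin n)) :
    Measurable fun x : Fin n → ℝ => Tuple.sort x = π := by
  simp_rw [eq_comm (a := Tuple.sort _), Tuple.eq_sort_iff, Monotone]
  refine .and (.forall fun i => .forall fun j => .imp measurable_const ?_)
    (.forall fun i => .forall fun j => .imp measurable_const (.imp ?_ measurable_const))
  · exact measurableSet_setOfPred.1 <|
      measurableSet_le (measurable_pi_apply _) (measurable_pi_apply _)
  · exact measurableSet_setOfPred.1 <|
      measurableSet_eq_fun (measurable_pi_apply _) (measurable_pi_apply _)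

theorem measurable_apply_sort {g : Equiv.Perm (Fin n) → (Fin n → ℝ) → ℝ}
    (hg : ∀ π, Measurable (g π)) : Measurable fun x => g (Tuple.sort x) x := by
  have hsum : (fun x => g (Tuple.sort x) x)
      = fun x => ∑ π, if Tuple.sort x = π then g π x else 0 := by
    simp
  rw [hsum]
  exact Finset.measurable_sum _ fun π _ =>
    (hg π).ite (measurableSet_setOfPred.2 (measurable_sort_eq π)) measurable_const

theorem measurable_choquet (ν : Finset (Fin n) → ℝ) : Measurable (choquet ν) :=
  measurable_apply_sort (g := fun π => choquetPerm ν (Fin.revPerm.trans π)) fun _ =>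
    Finset.measurable_sum _ fun _ _ => measurable_const.mul (measurable_pi_apply _)

theorem measurable_orderStat [MeasurableSpace Ω] {X : Fin n → Ω → ℝ} (hX : ∀ i, Measurable (X i))
    (m : ℕ) : Measurable (orderStat X m) := by
  unfold orderStat
  by_cases h : m - 1 < n ∧ 1 ≤ m
  · simp only [dif_pos h]
    exact (measurable_apply_sort (g := fun π x => x (π ⟨m - 1, h.1⟩)) fun _ =>
      measurable_pi_apply _).comp (measurable_pi_lambda _ hX)
  · simp only [dif_neg h]
    exact measurable_const

theorem sort_comp_perm {α : Type*} [LinearOrder α] {x : Fin n → α} (hx : Injective x)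
    (τ : Equiv.Perm (Fin n)) : Tuple.sort (x ∘ τ) = τ⁻¹ * Tuple.sort x := by
  refine Equiv.ext fun i => ?_
  rw [Equiv.Perm.mul_apply, Equiv.Perm.eq_inv_iff_eq]
  exact hx (congrFun Tuple.comp_perm_comp_sort_eq_comp_sort i)

theorem sortDesc_comp_perm {x : Fin n → ℝ} (hx : Injective x) (τ : Equiv.Perm (Fin n)) :
    sortDesc (x ∘ τ) = τ⁻¹ * sortDesc x := by
  ext i
  simp [sortDesc, sort_comp_perm hx]

theorem orderStat_sub_eq (X : Fin n → Ω → ℝ) (ω : Ω) (i : Fin n) :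
    orderStat X (n - i) ω = X (sortDesc (fun j => X j ω) i) ω := by
  have h : n - (i : ℕ) - 1 < n ∧ 1 ≤ n - (i : ℕ) := by omega
  have hrev : (⟨n - (i : ℕ) - 1, h.1⟩ : Fin n) = Fin.rev i := by ext; simp only [Fin.val_rev]; omega
  simp [orderStat, dif_pos h, hrev, sortDesc]

section Choquet

variable (ν : Finset (Fin n) → ℝ)

theorem choquet_comp_perm {x : Fin n → ℝ} (hx : Injective x) (τ : Equiv.Perm (Fin n)) :
    choquet ν (x ∘ τ) = ∑ i : Fin n, (nuSig ν (τ⁻¹ * sortDesc x) ((i : ℕ) + 1)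
      - nuSig ν (τ⁻¹ * sortDesc x) (i : ℕ)) * x (sortDesc x i) := by
  simp [choquet, choquetPerm, sortDesc_comp_perm hx]

theorem sum_perm_apply_choquet_comp {x : Fin n → ℝ} (hx : Injective x) (f : ℝ → ℝ) :
    ∑ τ : Equiv.Perm (Fin n), f (choquet ν (x ∘ τ)) = ∑ σ : Equiv.Perm (Fin n),
      f (∑ i : Fin n, (nuSig ν σ ((i : ℕ) + 1) - nuSig ν σ (i : ℕ)) * x (sortDesc x i)) := by
  simp_rw [choquet_comp_perm ν hx]
  exact Fintype.sum_equiv ((Equiv.inv _).trans (Equiv.mulRight (sortDesc x))) _ _ fun _ => rfl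

theorem sum_perm_choquet_comp_pow_eq_sum_Ysig_pow (X : Fin n → Ω → ℝ) {ω : Ω}
    (hω : Injective fun j => X j ω) (r : ℕ) :
    ∑ τ : Equiv.Perm (Fin n), choquet ν (fun i => X (τ i) ω) ^ r
      = ∑ σ : Equiv.Perm (Fin n), Ysig ν σ X ω ^ r := by
  simp only [Ysig, orderStat_sub_eq]
  exact sum_perm_apply_choquet_comp ν hω (· ^ r)

theorem pow_sum_mul {ι R : Type*} [Fintype ι] [CommSemiring R] (a b : ι → R) (r : ℕ) :
    (∑ i, a i * b i) ^ r = ∑ k : Fin r → ι, (∏ j, a (k j)) * ∏ j, b (k j) := by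
  simp_rw [Finset.sum_pow', Fintype.piFinset_univ, Finset.prod_mul_distrib]

theorem abs_choquetPerm_le (σ : Equiv.Perm (Fin n)) (x : Fin n → ℝ) :
    |choquetPerm ν σ x|
      ≤ (∑ i : Fin n, |nuSig ν σ ((i : ℕ) + 1) - nuSig ν σ (i : ℕ)|) * ∑ j, |x j| := by
  rw [choquetPerm, Finset.sum_mul]
  refine (Finset.abs_sum_le_sum_abs _ _).trans (Finset.sum_le_sum fun i _ => ?_)
  rw [abs_mul]
  exact mul_le_mul_of_nonneg_left
    (Finset.single_le_sum (f := fun j => |x j|) (fun _ _ => abs_nonneg _) (Finset.mem_univ _))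
    (abs_nonneg _)

theorem exists_abs_choquet_le : ∃ K, ∀ x : Fin n → ℝ, |choquet ν x| ≤ K * ∑ j, |x j| := by
  refine ⟨∑ σ : Equiv.Perm (Fin n), ∑ i : Fin n, |nuSig ν σ ((i : ℕ) + 1) - nuSig ν σ (i : ℕ)|,
    fun x => (abs_choquetPerm_le ν _ x).trans ?_⟩
  refine mul_le_mul_of_nonneg_right ?_ (Finset.sum_nonneg fun _ _ => abs_nonneg _)
  exact Finset.single_le_sum (f := fun σ : Equiv.Perm (Fin n) => ∑ i : Fin n,
    |nuSig ν σ ((i : ℕ) + 1) - nuSig ν σ (i : ℕ)|)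
    (fun _ _ => Finset.sum_nonneg fun _ _ => abs_nonneg _) (Finset.mem_univ _)

end Choquet

theorem abs_orderStat_le (X : Fin n → Ω → ℝ) (m : ℕ) (ω : Ω) :
    |orderStat X m ω| ≤ ∑ j, |X j ω| := by
  unfold orderStat
  split_ifs
  · exact Finset.single_le_sum (f := fun j => |X j ω|) (fun j _ => abs_nonneg _) (Finset.mem_univ _)
  · simpa using Finset.sum_nonneg fun j (_ : j ∈ Finset.univ) => abs_nonneg (X j ω)

section Probability

variable [MeasurableSpace Ω] {P : Measure Ω}

theorem measure_prod_diagonal_eq_zero {α : Type*} [MeasurableSpace α] [MeasurableEq α]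
    (μ ν : Measure α) [SFinite ν] [NullSingletonClass ν] : μ.prod ν (Set.diagonal α) = 0 := by
  have hfiber : ∀ a, Prod.mk a ⁻¹' Set.diagonal α = {a} := fun a => by ext; simp [eq_comm]
  simp [Measure.prod_apply measurableSet_diagonal, hfiber]

theorem measure_eq_eq_zero_of_indepFun {α : Type*} [MeasurableSpace α] [MeasurableEq α]
    [IsFiniteMeasure P] {f g : Ω → α} (hfg : IndepFun f g P) (hf : Measurable f)
    (hg : Measurable g) [NullSingletonClass (P.map g)] : P {ω | f ω = g ω} = 0 := by
  have hlaw := (indepFun_iff_map_prod_eq_prod_map_map hf.aemeasurable hg.aemeasurable).1 hfg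
  have hpre : {ω | f ω = g ω} = (fun ω => (f ω, g ω)) ⁻¹' Set.diagonal α := rfl
  rw [hpre, ← Measure.map_apply (hf.prodMk hg) measurableSet_diagonal, hlaw]
  exact measure_prod_diagonal_eq_zero _ _

variable {ι α : Type*} [MeasurableSpace α] {X : ι → Ω → α} {μ : Measure α}

theorem ae_injective_of_iIndepFun [Countable ι] [MeasurableEq α] (hX : ∀ i, Measurable (X i))
    (hindep : iIndepFun X P) (hdist : ∀ i, P.map (X i) = μ) [NullSingletonClass μ] :
    ∀ᵐ ω ∂P, Injective fun i => X i ω := by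
  have := hindep.isProbabilityMeasure
  have hpair : ∀ i j, ∀ᵐ ω ∂P, X i ω = X j ω → i = j := by
    intro i j
    by_cases hij : i = j
    · exact ae_of_all _ fun _ _ => hij
    · have : NullSingletonClass (P.map (X j)) := hdist j ▸ ‹_›
      filter_upwards [measure_eq_zero_iff_ae_notMem.1
        (measure_eq_eq_zero_of_indepFun (hindep.indepFun hij) (hX i) (hX j))] with ω hω h
      exact (hω h).elim
  filter_upwards [ae_all_iff.2 fun i => ae_all_iff.2 (hpair i)] with ω hω i j using hω i j

theorem map_comp_perm_eq_pi [Fintype ι] (hX : ∀ i, Measurable (X i)) (hindep : iIndepFun X P)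
    (hdist : ∀ i, P.map (X i) = μ) (τ : Equiv.Perm ι) :
    P.map (fun ω i => X (τ i) ω) = Measure.pi fun _ => μ := by
  rw [(hindep.precomp τ.injective).map_fun_eq_pi_map fun i => (hX (τ i)).aemeasurable]
  simp only [hdist]

theorem integral_eq_mul_sum_perm [Fintype ι] [DecidableEq ι] (hX : ∀ i, Measurable (X i))
    (hindep : iIndepFun X P) (hdist : ∀ i, P.map (X i) = μ) {F : (ι → α) → ℝ}
    (hF : Measurable F) :
    ∫ ω, F (fun i => X i ω) ∂P
      = 1 / (Fintype.card ι).factorial * ∑ τ : Equiv.Perm ι, ∫ ω, F (fun i => X (τ i) ω) ∂P := by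
  have hlaw : ∀ τ : Equiv.Perm ι,
      ∫ ω, F (fun i => X (τ i) ω) ∂P = ∫ x, F x ∂(Measure.pi fun _ => μ) := fun τ => by
    rw [← map_comp_perm_eq_pi hX hindep hdist τ,
      integral_map (measurable_pi_lambda _ fun i => hX (τ i)).aemeasurable hF.aestronglyMeasurable]
  have hperm : ∀ τ : Equiv.Perm ι,
      ∫ ω, F (fun i => X (τ i) ω) ∂P = ∫ ω, F (fun i => X i ω) ∂P :=
    fun τ => (hlaw τ).trans (hlaw 1).symm
  simp [hperm, Fintype.card_perm, Nat.factorial_ne_zero]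

end Probability

section Integrability

variable [MeasurableSpace Ω] {P : Measure Ω} {X : Fin n → Ω → ℝ} {r : ℕ}

theorem memLp_of_integrable_abs_pow {f : Ω → ℝ} (hf : AEStronglyMeasurable f P) (hr : r ≠ 0)
    (h : Integrable (fun ω => |f ω| ^ r) P) : MemLp f r P :=
  (integrable_norm_rpow_iff hf (by exact_mod_cast hr) (by simp)).1 (by simpa using h)

theorem integrable_sum_abs_pow [IsFiniteMeasure P] (hX : ∀ j, MemLp (X j) r P) :
    Integrable (fun ω => (∑ j, |X j ω|) ^ r) P := by
  have hsum : MemLp (fun ω => ∑ j, |X j ω|) r P := memLp_finsetSum _ fun j _ => (hX j).abs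
  simpa [abs_of_nonneg (Finset.sum_nonneg fun j _ => abs_nonneg (X j _))]
    using hsum.integrable_norm_pow'

theorem integrable_prod_orderStat (hX : ∀ i, Measurable (X i))
    (hS : Integrable (fun ω => (∑ j, |X j ω|) ^ r) P) (k : Fin r → ℕ) :
    Integrable (fun ω => ∏ i, orderStat X (k i) ω) P := by
  have hmeas : Measurable fun ω => ∏ i, orderStat X (k i) ω :=
    Finset.measurable_prod _ fun i _ => measurable_orderStat hX _
  refine hS.mono' hmeas.aestronglyMeasurable (ae_of_all _ fun ω => ?_)
  rw [Real.norm_eq_abs, Finset.abs_prod]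
  calc ∏ i, |orderStat X (k i) ω| ≤ ∏ _i : Fin r, ∑ j, |X j ω| :=
        Finset.prod_le_prod (fun _ _ => abs_nonneg _) fun i _ => abs_orderStat_le X (k i) ω
    _ = (∑ j, |X j ω|) ^ r := by simp

theorem integrable_choquet_comp_perm_pow (ν : Finset (Fin n) → ℝ) (hX : ∀ i, Measurable (X i))
    (hS : Integrable (fun ω => (∑ j, |X j ω|) ^ r) P) (τ : Equiv.Perm (Fin n)) :
    Integrable (fun ω => choquet ν (fun i => X (τ i) ω) ^ r) P := by
  obtain ⟨K, hK⟩ := exists_abs_choquet_le ν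
  have hmeas : Measurable fun ω => choquet ν (fun i => X (τ i) ω) ^ r :=
    ((measurable_choquet ν).comp (measurable_pi_lambda _ fun i => hX (τ i))).pow_const r
  refine (hS.const_mul (K ^ r)).mono' hmeas.aestronglyMeasurable (ae_of_all _ fun ω => ?_)
  rw [Real.norm_eq_abs, abs_pow, ← mul_pow]
  refine pow_le_pow_left₀ (abs_nonneg _) ?_ r
  calc |choquet ν fun i => X (τ i) ω| ≤ K * ∑ j, |X (τ j) ω| := hK _
    _ = K * ∑ j, |X j ω| := by rw [Equiv.sum_comp τ fun j => |X j ω|]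

end Integrability

theorem statement2_general {Ω : Type*} [MeasurableSpace Ω] {n : ℕ} (hn : 0 < n)
    (P : Measure Ω) [IsProbabilityMeasure P]
    (ν : Finset (Fin n) → ℝ)
    (X : Fin n → Ω → ℝ) (hmeas : ∀ i, Measurable (X i))
    (hindep : iIndepFun X P)
    (μ : Measure ℝ) (hac : μ ≪ volume) (hdist : ∀ i, Measure.map (X i) P = μ)
    (r : ℕ) (hr : 1 ≤ r)
    (hint : Integrable (fun ω => |X ⟨0, hn⟩ ω| ^ r) P) :
    ∫ ω, (choquet ν (fun i => X i ω)) ^ r ∂P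
      = (1 / (Nat.factorial n : ℝ)) *
          ∑ σ : Equiv.Perm (Fin n), ∑ k : Fin r → Fin n,
            (∏ i : Fin r, (nuSig ν σ ((k i : ℕ) + 1) - nuSig ν σ ((k i : ℕ)))) *
              ∫ ω, ∏ i : Fin r, orderStat X (n - (k i : ℕ)) ω ∂P := by
  have : NullSingletonClass μ := ⟨fun a => hac (measure_singleton a)⟩
  have hLp : ∀ j, MemLp (X j) r P := fun j =>
    IdentDistrib.memLp_snd ⟨(hmeas _).aemeasurable, (hmeas j).aemeasurable, by rw [hdist, hdist]⟩
      (memLp_of_integrable_abs_pow (hmeas _).aestronglyMeasurable (by omega) hint)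
  have hS := integrable_sum_abs_pow hLp
  have hterm := integrable_prod_orderStat hmeas hS
  calc ∫ ω, choquet ν (fun i => X i ω) ^ r ∂P
      = 1 / (Nat.factorial n : ℝ) *
          ∑ τ : Equiv.Perm (Fin n), ∫ ω, choquet ν (fun i => X (τ i) ω) ^ r ∂P := by
        simpa using integral_eq_mul_sum_perm hmeas hindep hdist ((measurable_choquet ν).pow_const r)
    _ = 1 / (Nat.factorial n : ℝ) * ∫ ω, ∑ σ : Equiv.Perm (Fin n), Ysig ν σ X ω ^ r ∂P := by
        rw [← integral_finsetSum _ fun τ _ => integrable_choquet_comp_perm_pow ν hmeas hS τ]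
        congr 1
        refine integral_congr_ae ?_
        filter_upwards [ae_injective_of_iIndepFun hmeas hindep hdist] with ω hω
        exact sum_perm_choquet_comp_pow_eq_sum_Ysig_pow ν X hω r
    _ = _ := by
        simp only [Ysig, pow_sum_mul]
        rw [integral_finsetSum _ fun σ _ => integrable_finsetSum _ fun k _ => (hterm _).const_mul _]
        refine congrArg _ (Finset.sum_congr rfl fun σ _ => ?_)
        rw [integral_finsetSum _ fun k _ => (hterm _).const_mul _]
        simp only [integral_const_mul]

/-- expansion of the `r`-th raw moment of the Choquet integral as a sum over
permutations and multi-indices of product moments of order statistics. -/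
theorem statement2 {Ω : Type*} [MeasurableSpace Ω] {n : ℕ} (hn : 0 < n)
    (P : Measure Ω) [IsProbabilityMeasure P]
    (ν : Finset (Fin n) → ℝ) (hν0 : ν ∅ = 0) (hν01 : ∀ T, ν T ∈ Set.Icc (0:ℝ) 1)
    (X : Fin n → Ω → ℝ) (hmeas : ∀ i, Measurable (X i))
    (hindep : iIndepFun X P)
    (μ : Measure ℝ) (hac : μ ≪ volume) (hdist : ∀ i, Measure.map (X i) P = μ)
    (r : ℕ) (hr : 1 ≤ r)
    (hint : Integrable (fun ω => |X ⟨0, hn⟩ ω| ^ r) P) :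
    ∫ ω, (choquet ν (fun i => X i ω)) ^ r ∂P
      = (1 / (Nat.factorial n : ℝ)) *
          ∑ σ : Equiv.Perm (Fin n), ∑ k : Fin r → Fin n,
            (∏ i : Fin r, (nuSig ν σ ((k i : ℕ) + 1) - nuSig ν σ ((k i : ℕ)))) *
              ∫ ω, ∏ i : Fin r, orderStat X (n - (k i : ℕ)) ω ∂P :=
  statement2_general hn P ν X hmeas hindep μ hac hdist r hr hint

end ChoquetPaper
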